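/- (Global informational robustness) For every finite economic environment, every player i, and every payoff type θ_i, BFR_i^∞(θ_i) = ∪_Y ∪_{y_i ∈ Y_i} ICR_i^{∞,Y}(θ_i, y_i), where the first union is over all finite information structures Y. -/
import Mathlib


open Finset

section Defs

variable {Θ0 Θ1 Θ2 A1 A2 Y1 Y2 : Type}
variable [Fintype Θ0] [Fintype Θ1] [Fintype Θ2] [Fintype A1] [Fintype A2]
variable [Fintype Y1] [Fintype Y2]

/-- A probability distribution on a finite type, encoded as a nonnegative
function summing to one. -/
def IsProb {X : Type} [Fintype X] (μ : X → ℝ) : Prop :=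
  (∀ x, 0 ≤ μ x) ∧ ∑ x, μ x = 1

/-- Expected utility of player 1 of action `a1` with payoff type `θ1` under
conjecture `μ` on `Θ0 × Θ2 × A2`. -/
def EU1 (u1 : A1 → A2 → Θ0 → Θ1 → Θ2 → ℝ) (μ : Θ0 × Θ2 × A2 → ℝ)
    (a1 : A1) (θ1 : Θ1) : ℝ :=
  ∑ x : Θ0 × Θ2 × A2, μ x * u1 a1 x.2.2 x.1 θ1 x.2.1

def EU2 (u2 : A1 → A2 → Θ0 → Θ1 → Θ2 → ℝ) (μ : Θ0 × Θ1 × A1 → ℝ)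
    (a2 : A2) (θ2 : Θ2) : ℝ :=
  ∑ x : Θ0 × Θ1 × A1, μ x * u2 x.2.2 a2 x.1 x.2.1 θ2

/-- Best replies of player 1 against conjecture `μ` for payoff type `θ1`. -/
def BR1 (u1 : A1 → A2 → Θ0 → Θ1 → Θ2 → ℝ) (μ : Θ0 × Θ2 × A2 → ℝ) (θ1 : Θ1) : Set A1 :=
  {a1 | ∀ b1, EU1 u1 μ b1 θ1 ≤ EU1 u1 μ a1 θ1}

def BR2 (u2 : A1 → A2 → Θ0 → Θ1 → Θ2 → ℝ) (μ : Θ0 × Θ1 × A1 → ℝ) (θ2 : Θ2) : Set A2 :=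
  {a2 | ∀ b2, EU2 u2 μ b2 θ2 ≤ EU2 u2 μ a2 θ2}

/-- One elimination step of belief-free rationalizability for player 1, given the
opponent's surviving correspondence `F2`. -/
def step1 (u1 : A1 → A2 → Θ0 → Θ1 → Θ2 → ℝ) (F2 : Θ2 → Set A2) (θ1 : Θ1) : Set A1 :=
  {a1 | ∃ μ : Θ0 × Θ2 × A2 → ℝ, IsProb μ ∧
    (∀ x, μ x ≠ 0 → x.2.2 ∈ F2 x.2.1) ∧ a1 ∈ BR1 u1 μ θ1}

def step2 (u2 : A1 → A2 → Θ0 → Θ1 → Θ2 → ℝ) (F1 : Θ1 → Set A1) (θ2 : Θ2) : Set A2 :=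
  {a2 | ∃ μ : Θ0 × Θ1 × A1 → ℝ, IsProb μ ∧
    (∀ x, μ x ≠ 0 → x.2.2 ∈ F1 x.2.1) ∧ a2 ∈ BR2 u2 μ θ2}

/-- The iterative belief-free rationalizability procedure (both players). -/
def BFR (u1 u2 : A1 → A2 → Θ0 → Θ1 → Θ2 → ℝ) :
    ℕ → (Θ1 → Set A1) × (Θ2 → Set A2)
  | 0 => (fun _ => Set.univ, fun _ => Set.univ)
  | n + 1 =>
      (fun θ1 => (BFR u1 u2 n).1 θ1 ∩ step1 u1 (BFR u1 u2 n).2 θ1,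
       fun θ2 => (BFR u1 u2 n).2 θ2 ∩ step2 u2 (BFR u1 u2 n).1 θ2)

def BFRinf1 (u1 u2 : A1 → A2 → Θ0 → Θ1 → Θ2 → ℝ) (θ1 : Θ1) : Set A1 :=
  ⋂ n, (BFR u1 u2 n).1 θ1

def BFRinf2 (u1 u2 : A1 → A2 → Θ0 → Θ1 → Θ2 → ℝ) (θ2 : Θ2) : Set A2 :=
  ⋂ n, (BFR u1 u2 n).2 θ2

/-- Marginal on `Θ0 × Θ2 × A2` of a belief on `Θ0 × Θ2 × Y2 × A2`. -/
def margA1 (μ : Θ0 × Θ2 × Y2 × A2 → ℝ) : Θ0 × Θ2 × A2 → ℝ :=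
  fun x => ∑ y2 : Y2, μ (x.1, x.2.1, y2, x.2.2)

/-- Marginal on `Θ0 × Θ2 × Y2` of a belief on `Θ0 × Θ2 × Y2 × A2`. -/
def margY1 (μ : Θ0 × Θ2 × Y2 × A2 → ℝ) : Θ0 × Θ2 × Y2 → ℝ :=
  fun x => ∑ a2 : A2, μ (x.1, x.2.1, x.2.2, a2)

def margA2 (μ : Θ0 × Θ1 × Y1 × A1 → ℝ) : Θ0 × Θ1 × A1 → ℝ :=
  fun x => ∑ y1 : Y1, μ (x.1, x.2.1, y1, x.2.2)

def margY2 (μ : Θ0 × Θ1 × Y1 × A1 → ℝ) : Θ0 × Θ1 × Y1 → ℝ :=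
  fun x => ∑ a1 : A1, μ (x.1, x.2.1, x.2.2, a1)

/-- One elimination step of interim correlated rationalizability for player 1. -/
def istep1 (u1 : A1 → A2 → Θ0 → Θ1 → Θ2 → ℝ)
    (π1 : Θ1 → Y1 → (Θ0 × Θ2 × Y2 → ℝ)) (F2 : Θ2 → Y2 → Set A2)
    (θ1 : Θ1) (y1 : Y1) : Set A1 :=
  {a1 | ∃ μ : Θ0 × Θ2 × Y2 × A2 → ℝ, IsProb μ ∧
    (∀ x, μ x ≠ 0 → x.2.2.2 ∈ F2 x.2.1 x.2.2.1) ∧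
    margY1 μ = π1 θ1 y1 ∧ a1 ∈ BR1 u1 (margA1 μ) θ1}

def istep2 (u2 : A1 → A2 → Θ0 → Θ1 → Θ2 → ℝ)
    (π2 : Θ2 → Y2 → (Θ0 × Θ1 × Y1 → ℝ)) (F1 : Θ1 → Y1 → Set A1)
    (θ2 : Θ2) (y2 : Y2) : Set A2 :=
  {a2 | ∃ μ : Θ0 × Θ1 × Y1 × A1 → ℝ, IsProb μ ∧
    (∀ x, μ x ≠ 0 → x.2.2.2 ∈ F1 x.2.1 x.2.2.1) ∧
    margY2 μ = π2 θ2 y2 ∧ a2 ∈ BR2 u2 (margA2 μ) θ2}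

/-- The iterative interim correlated rationalizability procedure in the Bayesian
game with information structure `(Y1, Y2, π1, π2)`. -/
def ICR (u1 u2 : A1 → A2 → Θ0 → Θ1 → Θ2 → ℝ)
    (π1 : Θ1 → Y1 → (Θ0 × Θ2 × Y2 → ℝ)) (π2 : Θ2 → Y2 → (Θ0 × Θ1 × Y1 → ℝ)) :
    ℕ → (Θ1 → Y1 → Set A1) × (Θ2 → Y2 → Set A2)
  | 0 => (fun _ _ => Set.univ, fun _ _ => Set.univ)
  | n + 1 =>
      (fun θ1 y1 => (ICR u1 u2 π1 π2 n).1 θ1 y1 ∩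
          istep1 u1 π1 (ICR u1 u2 π1 π2 n).2 θ1 y1,
       fun θ2 y2 => (ICR u1 u2 π1 π2 n).2 θ2 y2 ∩
          istep2 u2 π2 (ICR u1 u2 π1 π2 n).1 θ2 y2)

def ICRinf1 (u1 u2 : A1 → A2 → Θ0 → Θ1 → Θ2 → ℝ)
    (π1 : Θ1 → Y1 → (Θ0 × Θ2 × Y2 → ℝ)) (π2 : Θ2 → Y2 → (Θ0 × Θ1 × Y1 → ℝ))
    (θ1 : Θ1) (y1 : Y1) : Set A1 :=
  ⋂ n, (ICR u1 u2 π1 π2 n).1 θ1 y1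

def ICRinf2 (u1 u2 : A1 → A2 → Θ0 → Θ1 → Θ2 → ℝ)
    (π1 : Θ1 → Y1 → (Θ0 × Θ2 × Y2 → ℝ)) (π2 : Θ2 → Y2 → (Θ0 × Θ1 × Y1 → ℝ))
    (θ2 : Θ2) (y2 : Y2) : Set A2 :=
  ⋂ n, (ICR u1 u2 π1 π2 n).2 θ2 y2

/-- Distribution over `(θ0, θ_{-i}, a_{-i})` induced by `π1(θ1,y1)` and the
opponent's strategy `s2`. -/
def push1 [DecidableEq A2] (π1 : Θ1 → Y1 → (Θ0 × Θ2 × Y2 → ℝ))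
    (s2 : Θ2 → Y2 → A2) (θ1 : Θ1) (y1 : Y1) : Θ0 × Θ2 × A2 → ℝ :=
  fun x => ∑ y2 : Y2, if s2 x.2.1 y2 = x.2.2 then π1 θ1 y1 (x.1, x.2.1, y2) else 0

def push2 [DecidableEq A1] (π2 : Θ2 → Y2 → (Θ0 × Θ1 × Y1 → ℝ))
    (s1 : Θ1 → Y1 → A1) (θ2 : Θ2) (y2 : Y2) : Θ0 × Θ1 × A1 → ℝ :=
  fun x => ∑ y1 : Y1, if s1 x.2.1 y1 = x.2.2 then π2 θ2 y2 (x.1, x.2.1, y1) else 0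

/-- Bayes-Nash equilibrium of the Bayesian game. -/
def IsBNE [DecidableEq A1] [DecidableEq A2]
    (u1 u2 : A1 → A2 → Θ0 → Θ1 → Θ2 → ℝ)
    (π1 : Θ1 → Y1 → (Θ0 × Θ2 × Y2 → ℝ)) (π2 : Θ2 → Y2 → (Θ0 × Θ1 × Y1 → ℝ))
    (s1 : Θ1 → Y1 → A1) (s2 : Θ2 → Y2 → A2) : Prop :=
  (∀ θ1 y1, s1 θ1 y1 ∈ BR1 u1 (push1 π1 s2 θ1 y1) θ1) ∧
  (∀ θ2 y2, s2 θ2 y2 ∈ BR2 u2 (push2 π2 s1 θ2 y2) θ2)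

/-- One elimination step of Δ-rationalizability for player 1 under the
informational restriction `D1`. -/
def dstep1 (u1 : A1 → A2 → Θ0 → Θ1 → Θ2 → ℝ)
    (D1 : Θ1 → Set (Θ0 × Θ2 → ℝ)) (F2 : Θ2 → Set A2) (θ1 : Θ1) : Set A1 :=
  {a1 | ∃ μ : Θ0 × Θ2 × A2 → ℝ, IsProb μ ∧
    (fun p : Θ0 × Θ2 => ∑ a2 : A2, μ (p.1, p.2, a2)) ∈ D1 θ1 ∧
    (∀ x, μ x ≠ 0 → x.2.2 ∈ F2 x.2.1) ∧ a1 ∈ BR1 u1 μ θ1}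

def dstep2 (u2 : A1 → A2 → Θ0 → Θ1 → Θ2 → ℝ)
    (D2 : Θ2 → Set (Θ0 × Θ1 → ℝ)) (F1 : Θ1 → Set A1) (θ2 : Θ2) : Set A2 :=
  {a2 | ∃ μ : Θ0 × Θ1 × A1 → ℝ, IsProb μ ∧
    (fun p : Θ0 × Θ1 => ∑ a1 : A1, μ (p.1, p.2, a1)) ∈ D2 θ2 ∧
    (∀ x, μ x ≠ 0 → x.2.2 ∈ F1 x.2.1) ∧ a2 ∈ BR2 u2 μ θ2}

/-- The iterative Δ-rationalizability procedure. -/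
def DR (u1 u2 : A1 → A2 → Θ0 → Θ1 → Θ2 → ℝ)
    (D1 : Θ1 → Set (Θ0 × Θ2 → ℝ)) (D2 : Θ2 → Set (Θ0 × Θ1 → ℝ)) :
    ℕ → (Θ1 → Set A1) × (Θ2 → Set A2)
  | 0 => (fun _ => Set.univ, fun _ => Set.univ)
  | n + 1 =>
      (fun θ1 => (DR u1 u2 D1 D2 n).1 θ1 ∩ dstep1 u1 D1 (DR u1 u2 D1 D2 n).2 θ1,
       fun θ2 => (DR u1 u2 D1 D2 n).2 θ2 ∩ dstep2 u2 D2 (DR u1 u2 D1 D2 n).1 θ2)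

def DRinf1 (u1 u2 : A1 → A2 → Θ0 → Θ1 → Θ2 → ℝ)
    (D1 : Θ1 → Set (Θ0 × Θ2 → ℝ)) (D2 : Θ2 → Set (Θ0 × Θ1 → ℝ)) (θ1 : Θ1) : Set A1 :=
  ⋂ n, (DR u1 u2 D1 D2 n).1 θ1

def DRinf2 (u1 u2 : A1 → A2 → Θ0 → Θ1 → Θ2 → ℝ)
    (D1 : Θ1 → Set (Θ0 × Θ2 → ℝ)) (D2 : Θ2 → Set (Θ0 × Θ1 → ℝ)) (θ2 : Θ2) : Set A2 :=
  ⋂ n, (DR u1 u2 D1 D2 n).2 θ2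

end Defs
section Proof

variable {Θ0 Θ1 Θ2 A1 A2 : Type}
variable [Fintype Θ0] [Fintype Θ1] [Fintype Θ2] [Fintype A1] [Fintype A2]
variable (u1 u2 : A1 → A2 → Θ0 → Θ1 → Θ2 → ℝ)

lemma isProb_delta {X : Type} [Fintype X] [DecidableEq X] (c : X) :
    IsProb (fun x => if x = c then (1:ℝ) else 0) := by
  refine ⟨fun x => by dsimp only; split <;> norm_num, ?_⟩
  simp [IsProb]

lemma exists_br1 [Nonempty A1] (μ : Θ0 × Θ2 × A2 → ℝ) (θ1 : Θ1) :
    ∃ a1, a1 ∈ BR1 u1 μ θ1 := by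
  obtain ⟨a, -, ha⟩ := Finset.exists_max_image Finset.univ (fun b1 => EU1 u1 μ b1 θ1)
    ⟨Classical.arbitrary A1, Finset.mem_univ _⟩
  exact ⟨a, fun b => ha b (Finset.mem_univ _)⟩

lemma exists_br2 [Nonempty A2] (μ : Θ0 × Θ1 × A1 → ℝ) (θ2 : Θ2) :
    ∃ a2, a2 ∈ BR2 u2 μ θ2 := by
  obtain ⟨a, -, ha⟩ := Finset.exists_max_image Finset.univ (fun b2 => EU2 u2 μ b2 θ2)
    ⟨Classical.arbitrary A2, Finset.mem_univ _⟩
  exact ⟨a, fun b => ha b (Finset.mem_univ _)⟩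

lemma bfr_anti1 {m n : ℕ} (h : m ≤ n) (θ1 : Θ1) :
    (BFR u1 u2 n).1 θ1 ⊆ (BFR u1 u2 m).1 θ1 := by
  induction n, h using Nat.le_induction with
  | base => exact subset_rfl
  | succ n hmn ih => exact fun a ha => ih ha.1

lemma bfr_anti2 {m n : ℕ} (h : m ≤ n) (θ2 : Θ2) :
    (BFR u1 u2 n).2 θ2 ⊆ (BFR u1 u2 m).2 θ2 := by
  induction n, h using Nat.le_induction with
  | base => exact subset_rfl
  | succ n hmn ih => exact fun a ha => ih ha.1

lemma bfr_fix_of_eq {m n : ℕ} (h : m < n) (he : BFR u1 u2 m = BFR u1 u2 n) :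
    BFR u1 u2 (m+1) = BFR u1 u2 m := by
  have h1 : m + 1 ≤ n := h
  refine Prod.ext (funext fun θ1 => Set.Subset.antisymm ?_ ?_)
    (funext fun θ2 => Set.Subset.antisymm ?_ ?_)
  · exact bfr_anti1 u1 u2 (Nat.le_succ m) θ1
  · calc (BFR u1 u2 m).1 θ1 = (BFR u1 u2 n).1 θ1 := by rw [he]
      _ ⊆ (BFR u1 u2 (m+1)).1 θ1 := bfr_anti1 u1 u2 h1 θ1
  · exact bfr_anti2 u1 u2 (Nat.le_succ m) θ2
  · calc (BFR u1 u2 m).2 θ2 = (BFR u1 u2 n).2 θ2 := by rw [he]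
      _ ⊆ (BFR u1 u2 (m+1)).2 θ2 := bfr_anti2 u1 u2 h1 θ2

lemma bfr_const_of_fix {m : ℕ} (hm : BFR u1 u2 (m+1) = BFR u1 u2 m) :
    ∀ k, BFR u1 u2 (m + k) = BFR u1 u2 m := by
  intro k
  induction k with
  | zero => rfl
  | succ k ih =>
    have e1 : BFR u1 u2 (m + (k+1)) =
        (fun θ1 => (BFR u1 u2 (m+k)).1 θ1 ∩ step1 u1 (BFR u1 u2 (m+k)).2 θ1,
         fun θ2 => (BFR u1 u2 (m+k)).2 θ2 ∩ step2 u2 (BFR u1 u2 (m+k)).1 θ2) := rfl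
    rw [e1, ih]
    exact hm

lemma bfr_stab : ∃ N, ∀ n, N ≤ n → BFR u1 u2 n = BFR u1 u2 N := by
  have key : ∀ m : ℕ, BFR u1 u2 (m+1) = BFR u1 u2 m →
      ∀ n, m ≤ n → BFR u1 u2 n = BFR u1 u2 m := by
    intro m hm n hn
    obtain ⟨k, rfl⟩ := Nat.exists_eq_add_of_le hn
    exact bfr_const_of_fix u1 u2 hm k
  obtain ⟨m, n, hmn, he⟩ := Finite.exists_ne_map_eq_of_infinite (BFR u1 u2)
  rcases hmn.lt_or_gt with h | h
  · exact ⟨m, key m (bfr_fix_of_eq u1 u2 h he) ⟩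
  · exact ⟨n, key n (bfr_fix_of_eq u1 u2 h he.symm)⟩

lemma bfrinf1_eq_of_stab {N : ℕ} (hN : ∀ n, N ≤ n → BFR u1 u2 n = BFR u1 u2 N) (θ1 : Θ1) :
    BFRinf1 u1 u2 θ1 = (BFR u1 u2 N).1 θ1 := by
  apply Set.Subset.antisymm
  · exact Set.iInter_subset _ N
  · intro a ha
    apply Set.mem_iInter.2
    intro n
    rcases le_or_gt N n with h | h
    · rw [hN n h]; exact ha
    · exact bfr_anti1 u1 u2 h.le θ1 ha

lemma bfrinf2_eq_of_stab {N : ℕ} (hN : ∀ n, N ≤ n → BFR u1 u2 n = BFR u1 u2 N) (θ2 : Θ2) :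
    BFRinf2 u1 u2 θ2 = (BFR u1 u2 N).2 θ2 := by
  apply Set.Subset.antisymm
  · exact Set.iInter_subset _ N
  · intro a ha
    apply Set.mem_iInter.2
    intro n
    rcases le_or_gt N n with h | h
    · rw [hN n h]; exact ha
    · exact bfr_anti2 u1 u2 h.le θ2 ha

lemma bfrinf1_fix {θ1 : Θ1} {a1 : A1} (h : a1 ∈ BFRinf1 u1 u2 θ1) :
    ∃ μ : Θ0 × Θ2 × A2 → ℝ, IsProb μ ∧
      (∀ x, μ x ≠ 0 → x.2.2 ∈ BFRinf2 u1 u2 x.2.1) ∧ a1 ∈ BR1 u1 μ θ1 := by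
  obtain ⟨N, hN⟩ := bfr_stab u1 u2
  have h1 : a1 ∈ (BFR u1 u2 (N+1)).1 θ1 := Set.mem_iInter.1 h (N+1)
  obtain ⟨μ, hp, hs, hbr⟩ := h1.2
  exact ⟨μ, hp, fun x hx => by
    rw [bfrinf2_eq_of_stab u1 u2 hN]; exact hs x hx, hbr⟩

lemma bfrinf2_fix {θ2 : Θ2} {a2 : A2} (h : a2 ∈ BFRinf2 u1 u2 θ2) :
    ∃ μ : Θ0 × Θ1 × A1 → ℝ, IsProb μ ∧
      (∀ x, μ x ≠ 0 → x.2.2 ∈ BFRinf1 u1 u2 x.2.1) ∧ a2 ∈ BR2 u2 μ θ2 := by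
  obtain ⟨N, hN⟩ := bfr_stab u1 u2
  have h1 : a2 ∈ (BFR u1 u2 (N+1)).2 θ2 := Set.mem_iInter.1 h (N+1)
  obtain ⟨μ, hp, hs, hbr⟩ := h1.2
  exact ⟨μ, hp, fun x hx => by
    rw [bfrinf1_eq_of_stab u1 u2 hN]; exact hs x hx, hbr⟩

lemma br_closure1 : ∀ n (θ1 : Θ1) (μ : Θ0 × Θ2 × A2 → ℝ), IsProb μ →
    (∀ x, μ x ≠ 0 → x.2.2 ∈ (BFR u1 u2 n).2 x.2.1) →
    ∀ a1 ∈ BR1 u1 μ θ1, a1 ∈ (BFR u1 u2 (n+1)).1 θ1 := by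
  intro n
  induction n with
  | zero =>
    intro θ1 μ hp hs a1 hbr
    exact ⟨Set.mem_univ _, μ, hp, hs, hbr⟩
  | succ n ih =>
    intro θ1 μ hp hs a1 hbr
    exact ⟨ih θ1 μ hp (fun x hx => (hs x hx).1) a1 hbr, μ, hp, hs, hbr⟩

lemma br_closure2 : ∀ n (θ2 : Θ2) (μ : Θ0 × Θ1 × A1 → ℝ), IsProb μ →
    (∀ x, μ x ≠ 0 → x.2.2 ∈ (BFR u1 u2 n).1 x.2.1) →
    ∀ a2 ∈ BR2 u2 μ θ2, a2 ∈ (BFR u1 u2 (n+1)).2 θ2 := by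
  intro n
  induction n with
  | zero =>
    intro θ2 μ hp hs a2 hbr
    exact ⟨Set.mem_univ _, μ, hp, hs, hbr⟩
  | succ n ih =>
    intro θ2 μ hp hs a2 hbr
    exact ⟨ih θ2 μ hp (fun x hx => (hs x hx).1) a2 hbr, μ, hp, hs, hbr⟩

lemma bfr_nonempty [Nonempty Θ0] [Nonempty Θ1] [Nonempty Θ2] [Nonempty A1] [Nonempty A2]
    (n : ℕ) :
    (∀ θ1, ((BFR u1 u2 n).1 θ1).Nonempty) ∧ (∀ θ2, ((BFR u1 u2 n).2 θ2).Nonempty) := by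
  induction n with
  | zero => exact ⟨fun _ => Set.univ_nonempty, fun _ => Set.univ_nonempty⟩
  | succ n ih =>
    classical
    constructor
    · intro θ1
      obtain ⟨a2₀, ha2⟩ := ih.2 (Classical.arbitrary Θ2)
      obtain ⟨a1, hbr⟩ := exists_br1 u1
        (fun x => if x = ((Classical.arbitrary Θ0 : Θ0), (Classical.arbitrary Θ2 : Θ2), a2₀) then (1:ℝ) else 0) θ1
      refine ⟨a1, br_closure1 u1 u2 n θ1 _ (isProb_delta _) ?_ a1 hbr⟩
      intro x hx
      have hxc : x = ((Classical.arbitrary Θ0 : Θ0), (Classical.arbitrary Θ2 : Θ2), a2₀) := by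
        by_contra hne; simp [hne] at hx
      rw [hxc]
      exact ha2
    · intro θ2
      obtain ⟨a1₀, ha1⟩ := ih.1 (Classical.arbitrary Θ1)
      obtain ⟨a2, hbr⟩ := exists_br2 u2
        (fun x => if x = ((Classical.arbitrary Θ0 : Θ0), (Classical.arbitrary Θ1 : Θ1), a1₀) then (1:ℝ) else 0) θ2
      refine ⟨a2, br_closure2 u1 u2 n θ2 _ (isProb_delta _) ?_ a2 hbr⟩
      intro x hx
      have hxc : x = ((Classical.arbitrary Θ0 : Θ0), (Classical.arbitrary Θ1 : Θ1), a1₀) := by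
        by_contra hne; simp [hne] at hx
      rw [hxc]
      exact ha1

lemma bfrinf1_nonempty [Nonempty Θ0] [Nonempty Θ1] [Nonempty Θ2] [Nonempty A1] [Nonempty A2]
    (θ1 : Θ1) : (BFRinf1 u1 u2 θ1).Nonempty := by
  obtain ⟨N, hN⟩ := bfr_stab u1 u2
  rw [bfrinf1_eq_of_stab u1 u2 hN]
  exact (bfr_nonempty u1 u2 N).1 θ1

lemma bfrinf2_nonempty [Nonempty Θ0] [Nonempty Θ1] [Nonempty Θ2] [Nonempty A1] [Nonempty A2]
    (θ2 : Θ2) : (BFRinf2 u1 u2 θ2).Nonempty := by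
  obtain ⟨N, hN⟩ := bfr_stab u1 u2
  rw [bfrinf2_eq_of_stab u1 u2 hN]
  exact (bfr_nonempty u1 u2 N).2 θ2

end Proof
section Proof2

variable {Θ0 Θ1 Θ2 A1 A2 : Type}
variable [Fintype Θ0] [Fintype Θ1] [Fintype Θ2] [Fintype A1] [Fintype A2]
variable (u1 u2 : A1 → A2 → Θ0 → Θ1 → Θ2 → ℝ)

lemma sum_margA1 {Y2 : Type} [Fintype Y2] (μ : Θ0 × Θ2 × Y2 × A2 → ℝ) :
    ∑ x : Θ0 × Θ2 × A2, margA1 μ x = ∑ z : Θ0 × Θ2 × Y2 × A2, μ z := by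
  simp only [margA1, Fintype.sum_prod_type]
  exact Finset.sum_congr rfl fun θ0 _ => Finset.sum_congr rfl fun θ2 _ => Finset.sum_comm

lemma sum_margA2 {Y1 : Type} [Fintype Y1] (μ : Θ0 × Θ1 × Y1 × A1 → ℝ) :
    ∑ x : Θ0 × Θ1 × A1, margA2 μ x = ∑ z : Θ0 × Θ1 × Y1 × A1, μ z := by
  simp only [margA2, Fintype.sum_prod_type]
  exact Finset.sum_congr rfl fun θ0 _ => Finset.sum_congr rfl fun θ1 _ => Finset.sum_comm

lemma icr_subset_bfr {Y1 Y2 : Type} [Fintype Y1] [Fintype Y2]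
    (π1 : Θ1 → Y1 → (Θ0 × Θ2 × Y2 → ℝ)) (π2 : Θ2 → Y2 → (Θ0 × Θ1 × Y1 → ℝ)) (n : ℕ) :
    (∀ θ1 y1, (ICR u1 u2 π1 π2 n).1 θ1 y1 ⊆ (BFR u1 u2 n).1 θ1) ∧
    (∀ θ2 y2, (ICR u1 u2 π1 π2 n).2 θ2 y2 ⊆ (BFR u1 u2 n).2 θ2) := by
  induction n with
  | zero => exact ⟨fun _ _ => subset_rfl, fun _ _ => subset_rfl⟩
  | succ n ih =>
    constructor
    · rintro θ1 y1 a1 ⟨h1, μ, hp, hs, -, hbr⟩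
      refine ⟨ih.1 θ1 y1 h1, margA1 μ, ⟨fun x => Finset.sum_nonneg fun y2 _ => hp.1 _, ?_⟩, ?_, hbr⟩
      · rw [sum_margA1]; exact hp.2
      · intro x hx
        obtain ⟨y2, -, hy2⟩ := Finset.exists_ne_zero_of_sum_ne_zero hx
        exact ih.2 x.2.1 y2 (hs (x.1, x.2.1, y2, x.2.2) hy2)
    · rintro θ2 y2 a2 ⟨h1, μ, hp, hs, -, hbr⟩
      refine ⟨ih.2 θ2 y2 h1, margA2 μ, ⟨fun x => Finset.sum_nonneg fun y1 _ => hp.1 _, ?_⟩, ?_, hbr⟩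
      · rw [sum_margA2]; exact hp.2
      · intro x hx
        obtain ⟨y1, -, hy1⟩ := Finset.exists_ne_zero_of_sum_ne_zero hx
        exact ih.1 x.2.1 y1 (hs (x.1, x.2.1, y1, x.2.2) hy1)

lemma forward_construction [Nonempty Θ0] [Nonempty Θ1] [Nonempty Θ2] [Nonempty A1] [Nonempty A2] :
    ∃ (π1 : Θ1 → A1 → (Θ0 × Θ2 × A2 → ℝ)) (π2 : Θ2 → A2 → (Θ0 × Θ1 × A1 → ℝ)),
      (∀ θ1 y1, IsProb (π1 θ1 y1)) ∧ (∀ θ2 y2, IsProb (π2 θ2 y2)) ∧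
      (∀ θ1 a1, a1 ∈ BFRinf1 u1 u2 θ1 → a1 ∈ ICRinf1 u1 u2 π1 π2 θ1 a1) ∧
      (∀ θ2 a2, a2 ∈ BFRinf2 u1 u2 θ2 → a2 ∈ ICRinf2 u1 u2 π1 π2 θ2 a2) := by
  classical
  have hex1 : ∀ (θ1 : Θ1) (a1 : A1), ∃ ν : Θ0 × Θ2 × A2 → ℝ, IsProb ν ∧
      (∀ x, ν x ≠ 0 → x.2.2 ∈ BFRinf2 u1 u2 x.2.1) ∧
      (a1 ∈ BFRinf1 u1 u2 θ1 → a1 ∈ BR1 u1 ν θ1) := by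
    intro θ1 a1
    by_cases h : a1 ∈ BFRinf1 u1 u2 θ1
    · obtain ⟨ν, hp, hs, hbr⟩ := bfrinf1_fix u1 u2 h
      exact ⟨ν, hp, hs, fun _ => hbr⟩
    · obtain ⟨b1, hb1⟩ := bfrinf1_nonempty u1 u2 θ1
      obtain ⟨ν, hp, hs, -⟩ := bfrinf1_fix u1 u2 hb1
      exact ⟨ν, hp, hs, fun h' => absurd h' h⟩
  have hex2 : ∀ (θ2 : Θ2) (a2 : A2), ∃ ν : Θ0 × Θ1 × A1 → ℝ, IsProb ν ∧
      (∀ x, ν x ≠ 0 → x.2.2 ∈ BFRinf1 u1 u2 x.2.1) ∧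
      (a2 ∈ BFRinf2 u1 u2 θ2 → a2 ∈ BR2 u2 ν θ2) := by
    intro θ2 a2
    by_cases h : a2 ∈ BFRinf2 u1 u2 θ2
    · obtain ⟨ν, hp, hs, hbr⟩ := bfrinf2_fix u1 u2 h
      exact ⟨ν, hp, hs, fun _ => hbr⟩
    · obtain ⟨b2, hb2⟩ := bfrinf2_nonempty u1 u2 θ2
      obtain ⟨ν, hp, hs, -⟩ := bfrinf2_fix u1 u2 hb2
      exact ⟨ν, hp, hs, fun h' => absurd h' h⟩
  choose ν1 hν1p hν1s hν1br using hex1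
  choose ν2 hν2p hν2s hν2br using hex2
  refine ⟨ν1, ν2, hν1p, hν2p, ?_⟩
  have main : ∀ n, (∀ θ1 a1, a1 ∈ BFRinf1 u1 u2 θ1 →
        a1 ∈ (ICR u1 u2 ν1 ν2 n).1 θ1 a1) ∧
      (∀ θ2 a2, a2 ∈ BFRinf2 u1 u2 θ2 → a2 ∈ (ICR u1 u2 ν1 ν2 n).2 θ2 a2) := by
    intro n
    induction n with
    | zero => exact ⟨fun _ _ _ => Set.mem_univ _, fun _ _ _ => Set.mem_univ _⟩
    | succ n ih =>
      constructor
      · intro θ1 a1 h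
        refine ⟨ih.1 θ1 a1 h, fun z => if z.2.2.2 = z.2.2.1 then ν1 θ1 a1 (z.1, z.2.1, z.2.2.1) else 0,
          ⟨fun z => by dsimp only; split; exacts [(hν1p θ1 a1).1 _, le_rfl], ?_⟩, ?_, ?_, ?_⟩
        · -- total mass one
          rw [show (1:ℝ) = ∑ x : Θ0 × Θ2 × A2, ν1 θ1 a1 x from ((hν1p θ1 a1).2).symm]
          simp only [Fintype.sum_prod_type]
          refine Finset.sum_congr rfl fun θ0 _ => Finset.sum_congr rfl fun θ2 _ =>
            Finset.sum_congr rfl fun y2 _ => ?_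
          simp
        · -- support
          intro z hz
          have h1 : z.2.2.2 = z.2.2.1 := by by_contra hne; simp [hne] at hz
          have h2 : ν1 θ1 a1 (z.1, z.2.1, z.2.2.1) ≠ 0 := by
            intro h0; simp only [h0, ite_self] at hz; exact hz rfl
          have := hν1s θ1 a1 _ h2
          rw [h1]
          exact ih.2 z.2.1 z.2.2.1 this
        · -- margY1 = π1
          funext x
          show (∑ a2 : A2, if a2 = x.2.2 then ν1 θ1 a1 (x.1, x.2.1, x.2.2) else 0) = _
          rw [Finset.sum_ite_eq' Finset.univ x.2.2 (fun _ => ν1 θ1 a1 (x.1, x.2.1, x.2.2))]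
          simp
        · -- best reply
          have hm : margA1 (fun z : Θ0 × Θ2 × A2 × A2 =>
              if z.2.2.2 = z.2.2.1 then ν1 θ1 a1 (z.1, z.2.1, z.2.2.1) else 0) = ν1 θ1 a1 := by
            funext x
            show (∑ y2 : A2, if x.2.2 = y2 then ν1 θ1 a1 (x.1, x.2.1, y2) else 0) = _
            rw [Finset.sum_ite_eq Finset.univ x.2.2 (fun y2 => ν1 θ1 a1 (x.1, x.2.1, y2))]
            simp
          rw [hm]
          exact hν1br θ1 a1 h
      · intro θ2 a2 h
        refine ⟨ih.2 θ2 a2 h, fun z => if z.2.2.2 = z.2.2.1 then ν2 θ2 a2 (z.1, z.2.1, z.2.2.1) else 0,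
          ⟨fun z => by dsimp only; split; exacts [(hν2p θ2 a2).1 _, le_rfl], ?_⟩, ?_, ?_, ?_⟩
        · rw [show (1:ℝ) = ∑ x : Θ0 × Θ1 × A1, ν2 θ2 a2 x from ((hν2p θ2 a2).2).symm]
          simp only [Fintype.sum_prod_type]
          refine Finset.sum_congr rfl fun θ0 _ => Finset.sum_congr rfl fun θ1 _ =>
            Finset.sum_congr rfl fun y1 _ => ?_
          simp
        · intro z hz
          have h1 : z.2.2.2 = z.2.2.1 := by by_contra hne; simp [hne] at hz
          have h2 : ν2 θ2 a2 (z.1, z.2.1, z.2.2.1) ≠ 0 := by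
            intro h0; simp only [h0, ite_self] at hz; exact hz rfl
          have := hν2s θ2 a2 _ h2
          rw [h1]
          exact ih.1 z.2.1 z.2.2.1 this
        · funext x
          show (∑ a1 : A1, if a1 = x.2.2 then ν2 θ2 a2 (x.1, x.2.1, x.2.2) else 0) = _
          rw [Finset.sum_ite_eq' Finset.univ x.2.2 (fun _ => ν2 θ2 a2 (x.1, x.2.1, x.2.2))]
          simp
        · have hm : margA2 (fun z : Θ0 × Θ1 × A1 × A1 =>
              if z.2.2.2 = z.2.2.1 then ν2 θ2 a2 (z.1, z.2.1, z.2.2.1) else 0) = ν2 θ2 a2 := by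
            funext x
            show (∑ y1 : A1, if x.2.2 = y1 then ν2 θ2 a2 (x.1, x.2.1, y1) else 0) = _
            rw [Finset.sum_ite_eq Finset.univ x.2.2 (fun y1 => ν2 θ2 a2 (x.1, x.2.1, y1))]
            simp
          rw [hm]
          exact hν2br θ2 a2 h
  exact ⟨fun θ1 a1 h => Set.mem_iInter.2 fun n => (main n).1 θ1 a1 h,
         fun θ2 a2 h => Set.mem_iInter.2 fun n => (main n).2 θ2 a2 h⟩

end Proof2

theorem global_informational_robustness {Θ0 Θ1 Θ2 A1 A2 : Type} [Fintype Θ0] [Fintype Θ1] [Fintype Θ2] [Fintype A1] [Fintype A2]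
    (u1 u2 : A1 → A2 → Θ0 → Θ1 → Θ2 → ℝ)
    [Nonempty A1] [Nonempty A2] :
    (∀ (θ1 : Θ1) (a1 : A1), a1 ∈ BFRinf1 u1 u2 θ1 ↔
      ∃ (Y1 Y2 : Type) (_ : Fintype Y1) (_ : Fintype Y2)
        (π1 : Θ1 → Y1 → (Θ0 × Θ2 × Y2 → ℝ)) (π2 : Θ2 → Y2 → (Θ0 × Θ1 × Y1 → ℝ)),
        (∀ θ1 y1, IsProb (π1 θ1 y1)) ∧ (∀ θ2 y2, IsProb (π2 θ2 y2)) ∧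
        ∃ y1 : Y1, a1 ∈ ICRinf1 u1 u2 π1 π2 θ1 y1) ∧
    (∀ (θ2 : Θ2) (a2 : A2), a2 ∈ BFRinf2 u1 u2 θ2 ↔
      ∃ (Y1 Y2 : Type) (_ : Fintype Y1) (_ : Fintype Y2)
        (π1 : Θ1 → Y1 → (Θ0 × Θ2 × Y2 → ℝ)) (π2 : Θ2 → Y2 → (Θ0 × Θ1 × Y1 → ℝ)),
        (∀ θ1 y1, IsProb (π1 θ1 y1)) ∧ (∀ θ2 y2, IsProb (π2 θ2 y2)) ∧
        ∃ y2 : Y2, a2 ∈ ICRinf2 u1 u2 π1 π2 θ2 y2) := by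
  constructor
  · intro θ1 a1
    constructor
    · intro h
      haveI hΘ1 : Nonempty Θ1 := ⟨θ1⟩
      have h1 : a1 ∈ (BFR u1 u2 1).1 θ1 := Set.mem_iInter.1 h 1
      obtain ⟨μ, hp, -, -⟩ := h1.2
      have hne : Nonempty (Θ0 × Θ2 × A2) := by
        by_contra hc
        rw [not_nonempty_iff] at hc
        haveI := hc
        have hz : ∑ x : Θ0 × Θ2 × A2, μ x = 0 := by
          rw [Finset.univ_eq_empty]; exact Finset.sum_empty
        rw [hp.2] at hz
        norm_num at hz
      obtain ⟨x0⟩ := hne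
      haveI : Nonempty Θ0 := ⟨x0.1⟩
      haveI : Nonempty Θ2 := ⟨x0.2.1⟩
      obtain ⟨π1, π2, hπ1, hπ2, hfwd1, -⟩ := forward_construction u1 u2
      exact ⟨A1, A2, inferInstance, inferInstance, π1, π2, hπ1, hπ2, a1, hfwd1 θ1 a1 h⟩
    · rintro ⟨Y1, Y2, _, _, π1, π2, -, -, y1, hicr⟩
      exact Set.mem_iInter.2 fun n =>
        (icr_subset_bfr u1 u2 π1 π2 n).1 θ1 y1 (Set.mem_iInter.1 hicr n)
  · intro θ2 a2
    constructor
    · intro h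
      haveI hΘ2 : Nonempty Θ2 := ⟨θ2⟩
      have h1 : a2 ∈ (BFR u1 u2 1).2 θ2 := Set.mem_iInter.1 h 1
      obtain ⟨μ, hp, -, -⟩ := h1.2
      have hne : Nonempty (Θ0 × Θ1 × A1) := by
        by_contra hc
        rw [not_nonempty_iff] at hc
        haveI := hc
        have hz : ∑ x : Θ0 × Θ1 × A1, μ x = 0 := by
          rw [Finset.univ_eq_empty]; exact Finset.sum_empty
        rw [hp.2] at hz
        norm_num at hz
      obtain ⟨x0⟩ := hne
      haveI : Nonempty Θ0 := ⟨x0.1⟩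
      haveI : Nonempty Θ1 := ⟨x0.2.1⟩
      obtain ⟨π1, π2, hπ1, hπ2, -, hfwd2⟩ := forward_construction u1 u2
      exact ⟨A1, A2, inferInstance, inferInstance, π1, π2, hπ1, hπ2, a2, hfwd2 θ2 a2 h⟩
    · rintro ⟨Y1, Y2, _, _, π1, π2, -, -, y2, hicr⟩
      exact Set.mem_iInter.2 fun n =>
        (icr_subset_bfr u1 u2 π1 π2 n).2 θ2 y2 (Set.mem_iInter.1 hicr n)
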